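/- Correctness of the 3D DJT (lines) recursion: let N = 2^n and f : {0,...,N-1}³ → ℤ extended by zero. Define f^m(v, σ₁, σ₂, d₁, d₂) = Σ_{u ∈ {0,1}^m} f(λ(u,v), l^m_{λ(σ₁)}(u) + d₁, l^m_{λ(σ₂)}(u) + d₂). Then f^{m+1}(v, (s₁,σ₁), (s₂,σ₂), d₁, d₂) = f^m((0,v), σ₁, σ₂, d₁, d₂) + f^m((1,v), σ₁, σ₂, d₁ + s₁ + λ(σ₁), d₂ + s₂ + λ(σ₂)) for all bits s₁, s₂, tuples σ₁, σ₂ ∈ {0,1}^m, v ∈ {0,1}^{n-m-1}, and integers d₁, d₂. -/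

import Mathlib

open Finset

/-- Closed-form discrete line `l^n_s(u_0,...,u_{n-1})`. -/
def dline (n s : ℕ) (u : ℕ → ℕ) : ℕ :=
  ∑ i ∈ Finset.range n, u (n - 1 - i) * ((s / 2 ^ i + 1) / 2)

/-- `i`-th binary digit of `k` (least significant first). -/
def bit (k i : ℕ) : ℕ := k / 2 ^ i % 2

/-- Discrete line applied to the binary digits of `k`. -/
def Lline (n s k : ℕ) : ℕ := dline n s (bit k)

/-- Partial 3D DJT:
`f^m(v|σ₁|σ₂|d₁|d₂) = Σ_{u∈{0,1}^m} f(λ(u,v), l^m_{λ(σ₁)}(u)+d₁, l^m_{λ(σ₂)}(u)+d₂)`,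
with slopes and block index in decimal. -/
def pdjt (m : ℕ) (f : ℤ → ℤ → ℤ → ℤ) (v s₁ s₂ : ℕ) (d₁ d₂ : ℤ) : ℤ :=
  ∑ u ∈ Finset.range (2 ^ m),
    f ((u : ℤ) + 2 ^ m * (v : ℤ)) ((Lline m s₁ u : ℤ) + d₁) ((Lline m s₂ u : ℤ) + d₂)

lemma dline_succ (m s : ℕ) (u : ℕ → ℕ) :
    dline (m + 1) s u = u m * ((s + 1) / 2) + dline m (s / 2) u := by
  unfold dline
  rw [sum_range_succ', add_comm]
  congr 1
  · simp
  · refine sum_congr rfl fun i _ => ?_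
    rw [Nat.div_div_eq_div_mul, ← pow_succ']
    congr 2
    omega

lemma dline_congr {m : ℕ} (s : ℕ) {u u' : ℕ → ℕ} (h : ∀ i < m, u i = u' i) :
    dline m s u = dline m s u' := by
  refine sum_congr rfl fun i hi => ?_
  rw [h _ (by simp at hi; omega)]

lemma bit_eq_zero_of_lt {m u : ℕ} (h : u < 2 ^ m) : bit u m = 0 := by
  simp [bit, Nat.div_eq_of_lt h]

lemma bit_two_pow_add_self {m u : ℕ} (h : u < 2 ^ m) : bit (2 ^ m + u) m = 1 := by
  rw [bit, add_comm, Nat.add_div_right _ (by positivity), Nat.div_eq_of_lt h]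

lemma bit_two_pow_add_of_lt {m i : ℕ} (u : ℕ) (h : i < m) : bit (2 ^ m + u) i = bit u i := by
  have hpow : 2 ^ m = 2 ^ i * (2 * 2 ^ (m - i - 1)) := by
    rw [← pow_succ', ← pow_add]
    congr 1
    omega
  rw [bit, bit, hpow, add_comm, Nat.add_mul_div_left _ _ (by positivity),
    Nat.add_mul_mod_self_left]

lemma Lline_succ_of_lt {m u : ℕ} (s : ℕ) (hu : u < 2 ^ m) :
    Lline (m + 1) s u = Lline m (s / 2) u := by
  rw [Lline, dline_succ, bit_eq_zero_of_lt hu, zero_mul, zero_add, Lline]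

lemma Lline_succ_two_pow_add {m u : ℕ} (s : ℕ) (hu : u < 2 ^ m) :
    Lline (m + 1) s (2 ^ m + u) = (s + 1) / 2 + Lline m (s / 2) u := by
  rw [Lline, dline_succ, bit_two_pow_add_self hu, one_mul, Lline]
  exact congrArg _ (dline_congr _ fun i hi => bit_two_pow_add_of_lt u hi)

/-- Splitting `u ∈ [0, 2^(m+1))` by its top bit `u_m`: the top bit selects the block `2v` or
`2v+1`, and the top summand of the line contributes `⌊(s+1)/2⌋` to the offset when `u_m = 1`. -/
lemma pdjt_succ (m : ℕ) (f : ℤ → ℤ → ℤ → ℤ) (v s₁ s₂ : ℕ) (d₁ d₂ : ℤ) :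
    pdjt (m + 1) f v s₁ s₂ d₁ d₂ =
      pdjt m f (2 * v) (s₁ / 2) (s₂ / 2) d₁ d₂ +
      pdjt m f (2 * v + 1) (s₁ / 2) (s₂ / 2)
        (d₁ + ((s₁ + 1) / 2 : ℕ)) (d₂ + ((s₂ + 1) / 2 : ℕ)) := by
  unfold pdjt
  rw [pow_succ, mul_two, sum_range_add]
  congr 1
  · refine sum_congr rfl fun u hu => ?_
    rw [mem_range] at hu
    rw [Lline_succ_of_lt s₁ hu, Lline_succ_of_lt s₂ hu]
    push_cast
    ring_nf
  · refine sum_congr rfl fun u hu => ?_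
    rw [mem_range] at hu
    rw [Lline_succ_two_pow_add s₁ hu, Lline_succ_two_pow_add s₂ hu]
    push_cast
    ring_nf

theorem djt3_recursion_general (m : ℕ) (f : ℤ → ℤ → ℤ → ℤ)
    (s₁ : ℕ) (hs₁ : s₁ ≤ 1) (s₂ : ℕ) (hs₂ : s₂ ≤ 1)
    (σ₁ : ℕ) (σ₂ : ℕ)
    (v : ℕ) (d₁ d₂ : ℤ) :
    pdjt (m + 1) f v (s₁ + 2 * σ₁) (s₂ + 2 * σ₂) d₁ d₂ =
      pdjt m f (2 * v) σ₁ σ₂ d₁ d₂ +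
      pdjt m f (2 * v + 1) σ₁ σ₂ (d₁ + (s₁ : ℤ) + (σ₁ : ℤ)) (d₂ + (s₂ : ℤ) + (σ₂ : ℤ)) := by
  have halve : ∀ {s : ℕ} (σ : ℕ), s ≤ 1 → (s + 2 * σ) / 2 = σ := fun _ _ => by omega
  have hround : ∀ {s : ℕ} (σ : ℕ), s ≤ 1 → (s + 2 * σ + 1) / 2 = s + σ := fun _ _ => by omega
  rw [pdjt_succ, halve σ₁ hs₁, halve σ₂ hs₂, hround σ₁ hs₁, hround σ₂ hs₂]
  push_cast
  simp only [add_assoc]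

theorem djt3_recursion (n m : ℕ) (hm : m < n) (f : ℤ → ℤ → ℤ → ℤ)
    (hf : ∀ x y z : ℤ,
      x < 0 ∨ (2 : ℤ) ^ n ≤ x ∨ y < 0 ∨ (2 : ℤ) ^ n ≤ y ∨ z < 0 ∨ (2 : ℤ) ^ n ≤ z →
      f x y z = 0)
    (s₁ : ℕ) (hs₁ : s₁ ≤ 1) (s₂ : ℕ) (hs₂ : s₂ ≤ 1)
    (σ₁ : ℕ) (hσ₁ : σ₁ < 2 ^ m) (σ₂ : ℕ) (hσ₂ : σ₂ < 2 ^ m)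
    (v : ℕ) (hv : v < 2 ^ (n - m - 1)) (d₁ d₂ : ℤ) :
    pdjt (m + 1) f v (s₁ + 2 * σ₁) (s₂ + 2 * σ₂) d₁ d₂ =
      pdjt m f (2 * v) σ₁ σ₂ d₁ d₂ +
      pdjt m f (2 * v + 1) σ₁ σ₂ (d₁ + (s₁ : ℤ) + (σ₁ : ℤ)) (d₂ + (s₂ : ℤ) + (σ₂ : ℤ)) :=
  djt3_recursion_general m f s₁ hs₁ s₂ hs₂ σ₁ σ₂ v d₁ d₂
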